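/- Let P, Q be commuting von Neumann algebras (acting on Hilbert spaces forming a diagram), and let A, B, C, D be preclosed operators fitting in a square diagram A : P₀ → R₀, B : Q₀ → S₀, C : P₀ → Q₀, D : R₀ → S₀ between dense subspaces of Hilbert spaces P, Q, R, S. Form H = P ⊕ Q ⊕ R ⊕ S and the extension operators R̂ (extending A ⊕ B, zero on R ⊕ S) and Ŝ (extending C ⊕ D appropriately). Then R̂ and Ŝ are preclosed, and the strong commutativity of their closures is equivalent to the strong commutativity of the square diagram. -/

import Mathlib

section

variable {P Q R S : Type*}
  [NormedAddCommGroup P] [InnerProductSpace ℂ P] [CompleteSpace P]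
  [NormedAddCommGroup Q] [InnerProductSpace ℂ Q] [CompleteSpace Q]
  [NormedAddCommGroup R] [InnerProductSpace ℂ R] [CompleteSpace R]
  [NormedAddCommGroup S] [InnerProductSpace ℂ S] [CompleteSpace S]

/-- The Hilbert space direct sum `H = P ⊕ Q ⊕ R ⊕ S`. -/
abbrev DirSum4 (P Q R S : Type*)
    [NormedAddCommGroup P] [InnerProductSpace ℂ P]
    [NormedAddCommGroup Q] [InnerProductSpace ℂ Q]
    [NormedAddCommGroup R] [InnerProductSpace ℂ R]
    [NormedAddCommGroup S] [InnerProductSpace ℂ S] :=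
  WithLp 2 (WithLp 2 (P × Q) × WithLp 2 (R × S))

/-- The canonical linear identification of `DirSum4 P Q R S` with `(P × Q) × (R × S)`. -/
noncomputable def dirSum4Equiv : DirSum4 P Q R S ≃ₗ[ℂ] (P × Q) × (R × S) :=
  (WithLp.linearEquiv 2 ℂ (WithLp 2 (P × Q) × WithLp 2 (R × S))).trans
    ((WithLp.linearEquiv 2 ℂ (P × Q)).prodCongr (WithLp.linearEquiv 2 ℂ (R × S)))

/-- First component `ξ ∈ P` of an element of a submodule of the direct sum. -/
noncomputable def proj₁ (T : Submodule ℂ (DirSum4 P Q R S)) : T →ₗ[ℂ] P :=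
  (LinearMap.fst ℂ P Q).comp ((LinearMap.fst ℂ (P × Q) (R × S)).comp
    ((dirSum4Equiv (P := P) (Q := Q) (R := R) (S := S)).toLinearMap.comp T.subtype))

/-- Second component `η ∈ Q` of an element of a submodule of the direct sum. -/
noncomputable def proj₂ (T : Submodule ℂ (DirSum4 P Q R S)) : T →ₗ[ℂ] Q :=
  (LinearMap.snd ℂ P Q).comp ((LinearMap.fst ℂ (P × Q) (R × S)).comp
    ((dirSum4Equiv (P := P) (Q := Q) (R := R) (S := S)).toLinearMap.comp T.subtype))

/-- Third component `χ ∈ R` of an element of a submodule of the direct sum. -/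
noncomputable def proj₃ (T : Submodule ℂ (DirSum4 P Q R S)) : T →ₗ[ℂ] R :=
  (LinearMap.fst ℂ R S).comp ((LinearMap.snd ℂ (P × Q) (R × S)).comp
    ((dirSum4Equiv (P := P) (Q := Q) (R := R) (S := S)).toLinearMap.comp T.subtype))

/-- The extension `R̂` of the pair `A : P → R`, `B : Q → S` to the direct sum:
`R̂(ξ⊕η⊕χ⊕ς) = 0⊕0⊕Aξ⊕Bη`, with domain `D(A) ⊕ D(B) ⊕ R ⊕ S`. -/
noncomputable def Rhat (A : P →ₗ.[ℂ] R) (B : Q →ₗ.[ℂ] S) :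
    DirSum4 P Q R S →ₗ.[ℂ] DirSum4 P Q R S :=
  { domain := ((A.domain.prod B.domain).prod ⊤).comap
      (dirSum4Equiv (P := P) (Q := Q) (R := R) (S := S)).toLinearMap
    toFun := (dirSum4Equiv (P := P) (Q := Q) (R := R) (S := S)).symm.toLinearMap.comp <| LinearMap.prod 0 <| LinearMap.prod
      (A.toFun.comp ((proj₁ _).codRestrict A.domain fun z => z.2.1.1))
      (B.toFun.comp ((proj₂ _).codRestrict B.domain fun z => z.2.1.2)) }

/-- The extension `Ŝ` of the pair `C : P → Q`, `D : R → S` to the direct sum: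
`Ŝ(ξ⊕η⊕χ⊕ς) = 0⊕Cξ⊕0⊕Dχ`, with domain `D(C) ⊕ Q ⊕ D(D) ⊕ S`. -/
noncomputable def Shat (C : P →ₗ.[ℂ] Q) (D : R →ₗ.[ℂ] S) :
    DirSum4 P Q R S →ₗ.[ℂ] DirSum4 P Q R S :=
  { domain := ((C.domain.prod ⊤).prod (D.domain.prod ⊤)).comap
      (dirSum4Equiv (P := P) (Q := Q) (R := R) (S := S)).toLinearMap
    toFun := (dirSum4Equiv (P := P) (Q := Q) (R := R) (S := S)).symm.toLinearMap.comp <| LinearMap.prod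
      (LinearMap.prod 0 (C.toFun.comp ((proj₁ _).codRestrict C.domain fun z => z.2.1.1)))
      (LinearMap.prod 0 (D.toFun.comp ((proj₃ _).codRestrict D.domain fun z => z.2.2.1))) }

/-- Affiliation of a partially defined operator with a von Neumann algebra. -/
def Affiliated {H : Type*} [NormedAddCommGroup H] [InnerProductSpace ℂ H] [CompleteSpace H]
    (M : VonNeumannAlgebra H) (A : H →ₗ.[ℂ] H) : Prop :=
  ∀ u : H →L[ℂ] H, u ∈ M.commutant → u ∈ unitary (H →L[ℂ] H) →
    (∀ ξ : H, ξ ∈ A.domain → u ξ ∈ A.domain) ∧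
    ∀ (ξ : A.domain) (h : u ↑ξ ∈ A.domain), A ⟨u ↑ξ, h⟩ = u (A ξ)

/-- Two operators commute strongly if the von Neumann algebras they generate commute. -/
def StronglyCommutes {H : Type*} [NormedAddCommGroup H] [InnerProductSpace ℂ H]
    [CompleteSpace H] (A B : H →ₗ.[ℂ] H) : Prop :=
  ∃ M N : VonNeumannAlgebra H,
    (∀ x ∈ M, ∀ y ∈ N, Commute x y) ∧ Affiliated M A ∧ Affiliated N B

/-- The square diagram formed by `A`, `B`, `C`, `D` commutes strongly: by definition, the
closures of the extensions `R̂` and `Ŝ` commute strongly. -/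
def DiagramStronglyCommutes (A : P →ₗ.[ℂ] R) (B : Q →ₗ.[ℂ] S)
    (C : P →ₗ.[ℂ] Q) (D : R →ₗ.[ℂ] S) : Prop :=
  StronglyCommutes (Rhat A B).closure (Shat C D).closure

/-! A point `(0, y)` in the closure of the graph of `R̂` has `y = 0`: the `P`- and `Q`-components
of `y` vanish because they vanish on the graph and projections are continuous, while its `R`- and
`S`-components are limits of `A ξₙ`, `B ηₙ` with `ξₙ, ηₙ → 0`, hence zero because `A` and `B` are
closable. The same argument, with the components permuted, applies to `Ŝ`. -/

namespace LinearPMap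

variable {𝕜 E F G K : Type*} [CommRing 𝕜] [TopologicalSpace 𝕜]
  [AddCommGroup E] [Module 𝕜 E] [TopologicalSpace E] [ContinuousAdd E] [ContinuousSMul 𝕜 E]
  [AddCommGroup F] [Module 𝕜 F] [TopologicalSpace F] [ContinuousAdd F] [ContinuousSMul 𝕜 F]
  [AddCommGroup G] [Module 𝕜 G] [TopologicalSpace G]

theorem isClosable_of_closure_graph {f : E →ₗ.[𝕜] F}
    (h : ∀ z ∈ f.graph.topologicalClosure, z.1 = 0 → z.2 = 0) : f.IsClosable :=
  ⟨_, (Submodule.toLinearPMap_graph_eq _ h).symm⟩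

theorem map_eq_zero_of_mem_closure_graph [T1Space G] {f : E →ₗ.[𝕜] F} {z : E × F}
    (hz : z ∈ f.graph.topologicalClosure) (T : E × F →L[𝕜] G) (hT : ∀ w ∈ f.graph, T w = 0) :
    T z = 0 :=
  Submodule.topologicalClosure_minimal _ hT
    (ContinuousLinearMap.isClosed_ker T) hz

section

variable [ContinuousAdd G] [ContinuousSMul 𝕜 G]
  [AddCommGroup K] [Module 𝕜 K] [TopologicalSpace K] [ContinuousAdd K] [ContinuousSMul 𝕜 K]

theorem map_mem_closure_graph {f : E →ₗ.[𝕜] F} {g : G →ₗ.[𝕜] K} (hg : g.IsClosable)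
    {z : E × F} (hz : z ∈ f.graph.topologicalClosure) (T : E × F →L[𝕜] G × K)
    (hT : ∀ w ∈ f.graph, T w ∈ g.graph) : T z ∈ g.closure.graph := by
  rw [← hg.graph_closure_eq_closure_graph]
  exact closure_mono (Set.image_subset_iff.mpr hT)
    (image_closure_subset_closure_image T.continuous (Set.mem_image_of_mem _ hz))

theorem IsClosable.snd_eq_zero_of_map_graph {f : E →ₗ.[𝕜] F} {g : G →ₗ.[𝕜] K}
    (hg : g.IsClosable) {z : E × F} (hz : z ∈ f.graph.topologicalClosure)
    (T : E × F →L[𝕜] G × K) (hT : ∀ w ∈ f.graph, T w ∈ g.graph) (h : (T z).1 = 0) :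
    (T z).2 = 0 :=
  g.closure.graph_fst_eq_zero_snd (map_mem_closure_graph hg hz T hT) h

end

end LinearPMap

section

omit [CompleteSpace P] [CompleteSpace Q] [CompleteSpace R] [CompleteSpace S]

namespace DirSum4

noncomputable def toProd : DirSum4 P Q R S ≃L[ℂ] (P × Q) × (R × S) :=
  (WithLp.prodContinuousLinearEquiv 2 ℂ (WithLp 2 (P × Q)) (WithLp 2 (R × S))).trans
    ((WithLp.prodContinuousLinearEquiv 2 ℂ P Q).prodCongr
      (WithLp.prodContinuousLinearEquiv 2 ℂ R S))

noncomputable def projP : DirSum4 P Q R S →L[ℂ] P :=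
  .fst ℂ P Q ∘L .fst ℂ (P × Q) (R × S) ∘L toProd.toContinuousLinearMap

noncomputable def projQ : DirSum4 P Q R S →L[ℂ] Q :=
  .snd ℂ P Q ∘L .fst ℂ (P × Q) (R × S) ∘L toProd.toContinuousLinearMap

noncomputable def projR : DirSum4 P Q R S →L[ℂ] R :=
  .fst ℂ R S ∘L .snd ℂ (P × Q) (R × S) ∘L toProd.toContinuousLinearMap

noncomputable def projS : DirSum4 P Q R S →L[ℂ] S :=
  .snd ℂ R S ∘L .snd ℂ (P × Q) (R × S) ∘L toProd.toContinuousLinearMap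

theorem eq_zero_of_proj_eq_zero {x : DirSum4 P Q R S} (hP : projP x = 0) (hQ : projQ x = 0)
    (hR : projR x = 0) (hS : projS x = 0) : x = 0 :=
  (toProd (P := P) (Q := Q) (R := R) (S := S)).map_eq_zero_iff.mp
    (Prod.ext (Prod.ext hP hQ) (Prod.ext hR hS))

end DirSum4

open DirSum4 LinearPMap

theorem mem_graph_Rhat {A : P →ₗ.[ℂ] R} {B : Q →ₗ.[ℂ] S} {w : DirSum4 P Q R S × DirSum4 P Q R S}
    (hw : w ∈ (Rhat A B).graph) :
    projP w.2 = 0 ∧ projQ w.2 = 0 ∧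
      (projP w.1, projR w.2) ∈ A.graph ∧ (projQ w.1, projS w.2) ∈ B.graph := by
  obtain ⟨x, rfl⟩ := (mem_graph_iff' _).mp hw
  exact ⟨rfl, rfl, A.mem_graph ⟨_, x.2.1.1⟩, B.mem_graph ⟨_, x.2.1.2⟩⟩

theorem mem_graph_Shat {C : P →ₗ.[ℂ] Q} {D : R →ₗ.[ℂ] S} {w : DirSum4 P Q R S × DirSum4 P Q R S}
    (hw : w ∈ (Shat C D).graph) :
    projP w.2 = 0 ∧ projR w.2 = 0 ∧
      (projP w.1, projQ w.2) ∈ C.graph ∧ (projR w.1, projS w.2) ∈ D.graph := by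
  obtain ⟨x, rfl⟩ := (mem_graph_iff' _).mp hw
  exact ⟨rfl, rfl, C.mem_graph ⟨_, x.2.1.1⟩, D.mem_graph ⟨_, x.2.2.1⟩⟩

theorem isClosable_Rhat {A : P →ₗ.[ℂ] R} {B : Q →ₗ.[ℂ] S} (hA : A.IsClosable)
    (hB : B.IsClosable) : (Rhat A B).IsClosable := by
  refine isClosable_of_closure_graph fun z hz hz₁ => eq_zero_of_proj_eq_zero ?_ ?_ ?_ ?_
  · exact map_eq_zero_of_mem_closure_graph hz (projP ∘L .snd ℂ _ _)
      (fun w hw => (mem_graph_Rhat hw).1)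
  · exact map_eq_zero_of_mem_closure_graph hz (projQ ∘L .snd ℂ _ _)
      (fun w hw => (mem_graph_Rhat hw).2.1)
  · exact hA.snd_eq_zero_of_map_graph hz (projP.prodMap projR)
      (fun w hw => (mem_graph_Rhat hw).2.2.1) (by simp [hz₁])
  · exact hB.snd_eq_zero_of_map_graph hz (projQ.prodMap projS)
      (fun w hw => (mem_graph_Rhat hw).2.2.2) (by simp [hz₁])

theorem isClosable_Shat {C : P →ₗ.[ℂ] Q} {D : R →ₗ.[ℂ] S} (hC : C.IsClosable)
    (hD : D.IsClosable) : (Shat C D).IsClosable := by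
  refine isClosable_of_closure_graph fun z hz hz₁ => eq_zero_of_proj_eq_zero ?_ ?_ ?_ ?_
  · exact map_eq_zero_of_mem_closure_graph hz (projP ∘L .snd ℂ _ _)
      (fun w hw => (mem_graph_Shat hw).1)
  · exact hC.snd_eq_zero_of_map_graph hz (projP.prodMap projQ)
      (fun w hw => (mem_graph_Shat hw).2.2.1) (by simp [hz₁])
  · exact map_eq_zero_of_mem_closure_graph hz (projR ∘L .snd ℂ _ _)
      (fun w hw => (mem_graph_Shat hw).2.1)
  · exact hD.snd_eq_zero_of_map_graph hz (projR.prodMap projS)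
      (fun w hw => (mem_graph_Shat hw).2.2.2) (by simp [hz₁])

end

theorem stmt11_general (A : P →ₗ.[ℂ] R) (B : Q →ₗ.[ℂ] S) (C : P →ₗ.[ℂ] Q) (D : R →ₗ.[ℂ] S)
    (hA : A.IsClosable) (hB : B.IsClosable) (hC : C.IsClosable) (hD : D.IsClosable) :
    (Rhat A B).IsClosable ∧ (Shat C D).IsClosable ∧
    (StronglyCommutes (Rhat A B).closure (Shat C D).closure ↔
      DiagramStronglyCommutes A B C D) :=
  ⟨isClosable_Rhat hA hB, isClosable_Shat hC hD, Iff.rfl⟩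

/-- given preclosed operators `A : P₀ → R₀`, `B : Q₀ → S₀`, `C : P₀ → Q₀`,
`D : R₀ → S₀` fitting in a square diagram between dense subspaces of the Hilbert spaces
`P, Q, R, S`, the extensions `R̂` (of `A ⊕ B`) and `Ŝ` (of `C ⊕ D`) on `H = P ⊕ Q ⊕ R ⊕ S`
are preclosed, and strong commutativity of their closures is (by definition) equivalent to
strong commutativity of the square diagram. -/
theorem stmt11 (A : P →ₗ.[ℂ] R) (B : Q →ₗ.[ℂ] S) (C : P →ₗ.[ℂ] Q) (D : R →ₗ.[ℂ] S)
    (P₀ : Submodule ℂ P) (Q₀ : Submodule ℂ Q) (R₀ : Submodule ℂ R) (S₀ : Submodule ℂ S)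
    (hP₀ : Dense (P₀ : Set P)) (hQ₀ : Dense (Q₀ : Set Q))
    (hR₀ : Dense (R₀ : Set R)) (hS₀ : Dense (S₀ : Set S))
    (hAdom : A.domain ≤ P₀) (hBdom : B.domain ≤ Q₀)
    (hCdom : C.domain ≤ P₀) (hDdom : D.domain ≤ R₀)
    (hAran : ∀ ξ : A.domain, A ξ ∈ R₀) (hBran : ∀ ξ : B.domain, B ξ ∈ S₀)
    (hCran : ∀ ξ : C.domain, C ξ ∈ Q₀) (hDran : ∀ ξ : D.domain, D ξ ∈ S₀)
    (hA : A.IsClosable) (hB : B.IsClosable) (hC : C.IsClosable) (hD : D.IsClosable) :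
    (Rhat A B).IsClosable ∧ (Shat C D).IsClosable ∧
    (StronglyCommutes (Rhat A B).closure (Shat C D).closure ↔
      DiagramStronglyCommutes A B C D) :=
  stmt11_general A B C D hA hB hC hD

end
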